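/- arXiv:1602.08529 — 5 statements merged into one kernel-verified Lean document; each statement's English description precedes it below -/
import Mathlib

section
/- Fix α ∈ (1,√2) and y₁, y₂ ∈ [0,1], and suppose f(α,y₁,y₂) < 0, where f(α,y₁,y₂) = 4 − y₁ − y₂ − 2α²/(1 + y₁y₂). Then for every ε > 0 and c > 0 there exist δ > 0 and n₀ > 0 such that for all n ≥ n₀ and all positive integers k ≤ c log n, P( O(α,y₁,y₂,δ) ≠ ∅ ) < ε. -/
open MeasureTheory ProbabilityTheory Filter
open scoped ENNReal NNReal

noncomputable section

/-- Sum of the entries of the submatrix of the infinite array `A` with row set `I`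
and column set `J`. -/
def subSum (A : ℕ → ℕ → ℝ) (I J : Finset ℕ) : ℝ := ∑ i ∈ I, ∑ j ∈ J, A i j

/-- Average entry of the submatrix of `A` with row set `I` and column set `J`. -/
def subAve (A : ℕ → ℕ → ℝ) (I J : Finset ℕ) : ℝ :=
  subSum A I J / ((I.card : ℝ) * (J.card : ℝ))

/-- The overlap exponent `f(α, y₁, y₂) = 4 − y₁ − y₂ − 2α²/(1 + y₁·y₂)`. -/
def fOGP (α y₁ y₂ : ℝ) : ℝ := 4 - y₁ - y₂ - 2 * α ^ 2 / (1 + y₁ * y₂)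

open scoped Classical in
/-- The set `𝒪(α, y₁, y₂, δ)` of pairs of `k × k` submatrices `(C_{I₁,J₁}, C_{I₂,J₂})` of
the `n × n` corner of `A` (encoded by the pairs of index sets `((I₁,J₁),(I₂,J₂))`) whose
average entries lie in `[(α−δ)√(2 log n / k), (α+δ)√(2 log n / k)]` and whose overlaps
satisfy `|I₁∩I₂|/k ∈ (y₁−δ, y₁+δ)` and `|J₁∩J₂|/k ∈ (y₂−δ, y₂+δ)`. -/
def overlapPairs (A : ℕ → ℕ → ℝ) (n k : ℕ) (α y₁ y₂ δ : ℝ) :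
    Finset ((Finset ℕ × Finset ℕ) × (Finset ℕ × Finset ℕ)) :=
  (((Finset.range n).powersetCard k ×ˢ (Finset.range n).powersetCard k) ×ˢ
    ((Finset.range n).powersetCard k ×ˢ (Finset.range n).powersetCard k)).filter
    fun P =>
      ((α - δ) * Real.sqrt (2 * Real.log n / k) ≤ subAve A P.1.1 P.1.2 ∧
        subAve A P.1.1 P.1.2 ≤ (α + δ) * Real.sqrt (2 * Real.log n / k)) ∧
      ((α - δ) * Real.sqrt (2 * Real.log n / k) ≤ subAve A P.2.1 P.2.2 ∧
        subAve A P.2.1 P.2.2 ≤ (α + δ) * Real.sqrt (2 * Real.log n / k)) ∧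
      (y₁ - δ < ((P.1.1 ∩ P.2.1).card : ℝ) / k ∧ ((P.1.1 ∩ P.2.1).card : ℝ) / k < y₁ + δ) ∧
      (y₂ - δ < ((P.1.2 ∩ P.2.2).card : ℝ) / k ∧ ((P.1.2 ∩ P.2.2).card : ℝ) / k < y₂ + δ)

/-! A first-moment argument. For a fixed pair of `k × k` submatrices with row and column overlaps
`m₁, m₂`, the sum of the two entry sums is a centred Gaussian of variance `2k² + 2m₁m₂`, so by the
Chernoff bound both averages reach `(α - δ)√(2 log n / k)` with probability at most
`n ^ (-2(α - δ)²k / (1 + (y₁ + δ)(y₂ + δ)))` once `m_i < (y_i + δ)k`. A pair of `k`-sets with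
overlap above `γk` is fixed by the first set, the overlap and the `< (1 - γ)k` new elements, so
there are at most `(4 n^(2 - γ))^k` of them. The union bound gives `P(𝒪 ≠ ∅) ≤ (16 n^e)^k`, where
the exponent `e` tends to `f(α, y₁, y₂) < 0` as `δ → 0`. -/

open Finset Topology

section GaussianSums

variable {Ω ι : Type*} [MeasurableSpace Ω] {μ : Measure Ω}

lemma hasSubgaussianMGF_of_map_eq_gaussianReal {X : Ω → ℝ} (hX : AEMeasurable X μ)
    {v : ℝ≥0} (h : μ.map X = gaussianReal 0 v) : HasSubgaussianMGF X v μ := by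
  rw [← HasSubgaussianMGF.id_map_iff hX, h]
  exact ⟨integrable_exp_mul_gaussianReal, fun t => by simp [mgf_id_gaussianReal]⟩

variable {X : ι → Ω → ℝ}

lemma measureReal_sum_mul_ge_le (hmeas : ∀ p, AEMeasurable (X p) μ) (hindep : iIndepFun X μ)
    (hgauss : ∀ p, μ.map (X p) = gaussianReal 0 1) (s : Finset ι) (w : ι → ℝ) {a : ℝ}
    (ha : 0 ≤ a) :
    μ.real {ω | a ≤ ∑ p ∈ s, w p * X p ω} ≤ Real.exp (-a ^ 2 / (2 * ∑ p ∈ s, w p ^ 2)) := by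
  have hsubG : ∀ p ∈ s, HasSubgaussianMGF (fun ω => w p * X p ω) ⟨w p ^ 2, sq_nonneg _⟩ μ :=
    fun p _ => mul_one (⟨w p ^ 2, sq_nonneg _⟩ : ℝ≥0) ▸
      (hasSubgaussianMGF_of_map_eq_gaussianReal (hmeas p) (hgauss p)).const_mul (w p)
  have hindep' : iIndepFun (fun p ω => w p * X p ω) μ :=
    hindep.comp (fun p x => w p * x) fun p => measurable_const_mul _
  have h := HasSubgaussianMGF.measure_sum_ge_le_of_iIndepFun hindep' hsubG ha
  erw [NNReal.coe_sum] at h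
  exact h

lemma measureReal_sum_add_sum_ge_le [DecidableEq ι] (hmeas : ∀ p, AEMeasurable (X p) μ)
    (hindep : iIndepFun X μ) (hgauss : ∀ p, μ.map (X p) = gaussianReal 0 1) (s t : Finset ι)
    {a : ℝ} (ha : 0 ≤ a) :
    μ.real {ω | a ≤ ∑ p ∈ s, X p ω + ∑ p ∈ t, X p ω}
      ≤ Real.exp (-a ^ 2 / (2 * (#s + #t + 2 * #(s ∩ t)))) := by
  set w : ι → ℝ := fun p => (if p ∈ s then 1 else 0) + (if p ∈ t then 1 else 0)
  have hsum : ∀ ω, ∑ p ∈ s ∪ t, w p * X p ω = ∑ p ∈ s, X p ω + ∑ p ∈ t, X p ω := fun ω => by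
    simp only [w, add_mul, ite_mul, one_mul, zero_mul, sum_add_distrib, sum_ite_mem,
      union_inter_cancel_left, union_inter_cancel_right]
  have hw_sq : ∀ p, w p ^ 2 = (if p ∈ s then 1 else 0) + (if p ∈ t then 1 else 0)
      + 2 * (if p ∈ s ∩ t then 1 else 0) := fun p => by
    by_cases hs : p ∈ s <;> by_cases ht : p ∈ t <;> norm_num [w, hs, ht]
  have hvar : ∑ p ∈ s ∪ t, w p ^ 2 = #s + #t + 2 * #(s ∩ t) := by
    simp only [hw_sq, sum_add_distrib, ← mul_sum, sum_ite_mem, union_inter_cancel_left,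
      union_inter_cancel_right, inter_eq_right.mpr (inter_subset_left.trans subset_union_left)]
    simp
  simpa only [hsum, hvar] using measureReal_sum_mul_ge_le hmeas hindep hgauss (s ∪ t) w ha

end GaussianSums

lemma subSum_eq_sum_product (A : ℕ → ℕ → ℝ) (I J : Finset ℕ) :
    subSum A I J = ∑ p ∈ I ×ˢ J, A p.1 p.2 :=
  (sum_product I J fun p => A p.1 p.2).symm

lemma measureReal_subAve_ge_and_subAve_ge_le {Ω : Type*} [MeasurableSpace Ω] {μ : Measure Ω}
    [IsFiniteMeasure μ] (C : Ω → ℕ → ℕ → ℝ) (hCmeas : ∀ i j, Measurable fun ω => C ω i j)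
    (hCindep : iIndepFun (fun p : ℕ × ℕ => fun ω => C ω p.1 p.2) μ)
    (hCgauss : ∀ i j, μ.map (fun ω => C ω i j) = gaussianReal 0 1)
    {k : ℕ} (hk : 0 < k) {I₁ J₁ I₂ J₂ : Finset ℕ}
    (hI₁ : #I₁ = k) (hJ₁ : #J₁ = k) (hI₂ : #I₂ = k) (hJ₂ : #J₂ = k) {t : ℝ} (ht : 0 ≤ t) :
    μ.real {ω | t ≤ subAve (C ω) I₁ J₁ ∧ t ≤ subAve (C ω) I₂ J₂}
      ≤ Real.exp (-((k : ℝ) ^ 4 * t ^ 2) / ((k : ℝ) ^ 2 + #(I₁ ∩ I₂) * #(J₁ ∩ J₂))) := by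
  have hk2 : (0 : ℝ) < (k : ℝ) * k := by positivity
  have hsub : {ω | t ≤ subAve (C ω) I₁ J₁ ∧ t ≤ subAve (C ω) I₂ J₂}
      ⊆ {ω | 2 * k ^ 2 * t ≤ ∑ p ∈ I₁ ×ˢ J₁, C ω p.1 p.2 + ∑ p ∈ I₂ ×ˢ J₂, C ω p.1 p.2} := by
    rintro ω ⟨h₁, h₂⟩
    simp only [subAve, hI₁, hJ₁, hI₂, hJ₂, le_div_iff₀ hk2, subSum_eq_sum_product] at h₁ h₂
    change 2 * (k : ℝ) ^ 2 * t ≤ _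
    linarith
  have hinter : #((I₁ ×ˢ J₁) ∩ (I₂ ×ˢ J₂)) = #(I₁ ∩ I₂) * #(J₁ ∩ J₂) := by
    rw [product_inter_product, card_product]
  refine (measureReal_mono hsub).trans ?_
  refine (measureReal_sum_add_sum_ge_le (fun p : ℕ × ℕ => (hCmeas p.1 p.2).aemeasurable) hCindep
    (fun p : ℕ × ℕ => hCgauss p.1 p.2) _ _ (by positivity)).trans (le_of_eq ?_)
  rw [hinter, card_product, card_product, hI₁, hJ₁, hI₂, hJ₂]
  push_cast
  congr 1
  field_simp
  ring

lemma measureReal_subAve_ge_and_subAve_ge_le_rpow {Ω : Type*} [MeasurableSpace Ω]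
    {μ : Measure Ω} [IsFiniteMeasure μ] (C : Ω → ℕ → ℕ → ℝ)
    (hCmeas : ∀ i j, Measurable fun ω => C ω i j)
    (hCindep : iIndepFun (fun p : ℕ × ℕ => fun ω => C ω p.1 p.2) μ)
    (hCgauss : ∀ i j, μ.map (fun ω => C ω i j) = gaussianReal 0 1)
    {n k : ℕ} (hn : 1 ≤ n) (hk : 0 < k) {I₁ J₁ I₂ J₂ : Finset ℕ}
    (hI₁ : #I₁ = k) (hJ₁ : #J₁ = k) (hI₂ : #I₂ = k) (hJ₂ : #J₂ = k) {β R : ℝ} (hβ : 0 ≤ β)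
    (hm : (#(I₁ ∩ I₂) : ℝ) * #(J₁ ∩ J₂) ≤ R * k ^ 2) :
    μ.real {ω | β * √(2 * Real.log n / k) ≤ subAve (C ω) I₁ J₁ ∧
        β * √(2 * Real.log n / k) ≤ subAve (C ω) I₂ J₂}
      ≤ ((n : ℝ) ^ (-(2 * β ^ 2 / (1 + R)))) ^ k := by
  set t := β * √(2 * Real.log n / k)
  have hn0 : (0 : ℝ) < n := by exact_mod_cast hn
  have hL : 0 ≤ Real.log n := Real.log_nonneg (by exact_mod_cast hn)
  calc μ.real {ω | t ≤ subAve (C ω) I₁ J₁ ∧ t ≤ subAve (C ω) I₂ J₂}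
      ≤ Real.exp (-((k : ℝ) ^ 4 * t ^ 2) / ((k : ℝ) ^ 2 + #(I₁ ∩ I₂) * #(J₁ ∩ J₂))) :=
        measureReal_subAve_ge_and_subAve_ge_le C hCmeas hCindep hCgauss hk hI₁ hJ₁ hI₂ hJ₂
          (by positivity)
    _ ≤ Real.exp (-((k : ℝ) ^ 4 * t ^ 2) / ((k : ℝ) ^ 2 * (1 + R))) := by
        rw [Real.exp_le_exp, neg_div, neg_div, neg_le_neg_iff]
        gcongr
        linarith
    _ = ((n : ℝ) ^ (-(2 * β ^ 2 / (1 + R)))) ^ k := by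
        rw [mul_pow, Real.sq_sqrt (by positivity), Real.rpow_def_of_pos hn0, ← Real.exp_nat_mul]
        congr 1
        field_simp

lemma card_powerset_filter_card_lt_le {n : ℕ} (hn : 1 ≤ n) (m : ℕ) (B : ℝ) :
    (#{T ∈ (range n).powerset | #T ≤ m ∧ (#T : ℝ) < B} : ℝ) ≤ (m + 1) * (n : ℝ) ^ B := by
  set D := {T ∈ (range n).powerset | #T ≤ m ∧ (#T : ℝ) < B}
  have hfiber : ∀ j, (#{T ∈ D | #T = j} : ℝ) ≤ (n : ℝ) ^ B := by
    intro j
    rcases {T ∈ D | #T = j}.eq_empty_or_nonempty with hempty | ⟨T, hT⟩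
    · simp [hempty, Real.rpow_nonneg]
    have hjB : (j : ℝ) < B := by
      simp only [D, mem_filter] at hT
      exact hT.2 ▸ hT.1.2.2
    have hsub : {T ∈ D | #T = j} ⊆ (range n).powersetCard j := fun T hT => by
      simp only [D, mem_filter, mem_powerset] at hT
      exact mem_powersetCard.2 ⟨hT.1.1, hT.2⟩
    calc (#{T ∈ D | #T = j} : ℝ) ≤ #((range n).powersetCard j) := by
          exact_mod_cast card_le_card hsub
      _ ≤ (n : ℝ) ^ j := by
        rw [card_powersetCard, card_range]
        exact_mod_cast Nat.choose_le_pow n j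
      _ ≤ (n : ℝ) ^ B := by
        rw [← Real.rpow_natCast]
        exact Real.rpow_le_rpow_of_exponent_le (by exact_mod_cast hn) hjB.le
  have hmaps : Set.MapsTo card (D : Set (Finset ℕ)) (range (m + 1)) := fun T hT => by
    simp only [D, coe_filter, Set.mem_ofPred_eq] at hT
    exact mem_range.2 (Nat.lt_succ_of_le hT.2.1)
  calc (#D : ℝ) = ∑ j ∈ range (m + 1), (#{T ∈ D | #T = j} : ℝ) := by
        exact_mod_cast card_eq_sum_card_fiberwise hmaps
    _ ≤ ∑ _j ∈ range (m + 1), (n : ℝ) ^ B := sum_le_sum fun j _ => hfiber j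
    _ = (m + 1) * (n : ℝ) ^ B := by simp

lemma card_filter_lt_card_inter_le {n k : ℕ} (hk : 0 < k) {I : Finset ℕ} (hI : #I = k) (γ : ℝ) :
    #{J ∈ (range n).powersetCard k | γ < (#(I ∩ J) : ℝ) / k}
      ≤ 2 ^ k * #{T ∈ (range n).powerset | #T ≤ k ∧ (#T : ℝ) < (1 - γ) * k} := by
  set F := {J ∈ (range n).powersetCard k | γ < (#(I ∩ J) : ℝ) / k}
  set D := {T ∈ (range n).powerset | #T ≤ k ∧ (#T : ℝ) < (1 - γ) * k}
  have hmaps : Set.MapsTo (fun J => (I ∩ J, J \ I)) F ↑(I.powerset ×ˢ D) := by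
    intro J hJ
    simp only [F, coe_filter, mem_powersetCard, Set.mem_ofPred_eq] at hJ
    obtain ⟨⟨hJn, hJk⟩, hγ⟩ := hJ
    have hcard : (#(J \ I) : ℝ) + #(I ∩ J) = k := by
      rw [inter_comm]; exact_mod_cast (card_sdiff_add_card_inter J I).trans hJk
    rw [lt_div_iff₀ (by exact_mod_cast hk)] at hγ
    simp only [D, coe_product, Set.mem_prod, mem_coe, mem_powerset, mem_filter]
    refine ⟨inter_subset_left, sdiff_subset.trans hJn, ?_, by linarith⟩
    exact (card_le_card sdiff_subset).trans hJk.le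
  have hinj : Set.InjOn (fun J => (I ∩ J, J \ I)) F := by
    intro J₁ _ J₂ _ h
    simp only [Prod.mk.injEq] at h
    rw [← sdiff_union_inter J₁ I, ← sdiff_union_inter J₂ I, inter_comm J₁, inter_comm J₂, h.1, h.2]
  calc _ ≤ #(I.powerset ×ˢ D) := card_le_card_of_injOn _ hmaps hinj
    _ = 2 ^ k * #D := by rw [card_product, card_powerset, hI]

def largeOverlapPairs (n k : ℕ) (γ : ℝ) : Finset (Finset ℕ × Finset ℕ) :=
  {u ∈ (range n).powersetCard k ×ˢ (range n).powersetCard k | γ < (#(u.1 ∩ u.2) : ℝ) / k}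

lemma card_largeOverlapPairs_le {n k : ℕ} (hn : 1 ≤ n) (hk : 0 < k) (γ : ℝ) :
    (#(largeOverlapPairs n k γ) : ℝ) ≤ (4 * (n : ℝ) ^ (2 - γ)) ^ k := by
  set P := (range n).powersetCard k
  set D := {T ∈ (range n).powerset | #T ≤ k ∧ (#T : ℝ) < (1 - γ) * k}
  have hn0 : (0 : ℝ) < n := by exact_mod_cast hn
  have hcount : #(largeOverlapPairs n k γ) ≤ n.choose k * (2 ^ k * #D) := by
    rw [largeOverlapPairs, card_filter, sum_product]
    calc ∑ I ∈ P, ∑ J ∈ P, (if γ < (#(I ∩ J) : ℝ) / k then 1 else 0)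
        = ∑ I ∈ P, #{J ∈ P | γ < (#(I ∩ J) : ℝ) / k} := by simp only [card_filter]
      _ ≤ ∑ _I ∈ P, 2 ^ k * #D :=
        sum_le_sum fun I hI => card_filter_lt_card_inter_le hk (mem_powersetCard.1 hI).2 γ
      _ = n.choose k * (2 ^ k * #D) := by rw [sum_const, card_powersetCard, card_range, smul_eq_mul]
  have hD : (#D : ℝ) ≤ 2 ^ k * ((n : ℝ) ^ (1 - γ)) ^ k := by
    calc (#D : ℝ) ≤ (k + 1) * (n : ℝ) ^ ((1 - γ) * k) := card_powerset_filter_card_lt_le hn k _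
      _ ≤ 2 ^ k * ((n : ℝ) ^ (1 - γ)) ^ k := by
        rw [Real.rpow_mul_natCast hn0.le]
        gcongr
        exact_mod_cast Nat.lt_two_pow_self
  calc (#(largeOverlapPairs n k γ) : ℝ) ≤ n.choose k * (2 ^ k * #D) := by exact_mod_cast hcount
    _ ≤ (n : ℝ) ^ k * (2 ^ k * (2 ^ k * ((n : ℝ) ^ (1 - γ)) ^ k)) := by
        gcongr
        exact_mod_cast Nat.choose_le_pow n k
    _ = (2 ^ k * 2 ^ k) * ((n : ℝ) * (n : ℝ) ^ (1 - γ)) ^ k := by ring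
    _ = (4 * (n : ℝ) ^ (2 - γ)) ^ k := by
        rw [← mul_pow, ← mul_pow, show 2 - γ = 1 + (1 - γ) by ring, Real.rpow_add hn0,
          Real.rpow_one]
        norm_num

lemma measureReal_overlapPairs_nonempty_le {Ω : Type*} [MeasurableSpace Ω] {μ : Measure Ω}
    [IsFiniteMeasure μ] (C : Ω → ℕ → ℕ → ℝ) (hCmeas : ∀ i j, Measurable fun ω => C ω i j)
    (hCindep : iIndepFun (fun p : ℕ × ℕ => fun ω => C ω p.1 p.2) μ)
    (hCgauss : ∀ i j, μ.map (fun ω => C ω i j) = gaussianReal 0 1)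
    {n k : ℕ} (hn : 1 ≤ n) (hk : 0 < k) {α y₁ y₂ δ : ℝ} (hδα : δ ≤ α) :
    μ.real {ω | (overlapPairs (C ω) n k α y₁ y₂ δ).Nonempty}
      ≤ #(largeOverlapPairs n k (y₁ - δ)) * #(largeOverlapPairs n k (y₂ - δ))
        * ((n : ℝ) ^ (-(2 * (α - δ) ^ 2 / (1 + (y₁ + δ) * (y₂ + δ))))) ^ k := by
  set t := (α - δ) * √(2 * Real.log n / k)
  set R := (y₁ + δ) * (y₂ + δ)
  set bound := ((n : ℝ) ^ (-(2 * (α - δ) ^ 2 / (1 + R)))) ^ k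
  set S := {uv ∈ largeOverlapPairs n k (y₁ - δ) ×ˢ largeOverlapPairs n k (y₂ - δ) |
    (#(uv.1.1 ∩ uv.1.2) : ℝ) / k < y₁ + δ ∧ (#(uv.2.1 ∩ uv.2.2) : ℝ) / k < y₂ + δ}
  set E : (Finset ℕ × Finset ℕ) × (Finset ℕ × Finset ℕ) → Set Ω := fun uv =>
    {ω | t ≤ subAve (C ω) uv.1.1 uv.2.1 ∧ t ≤ subAve (C ω) uv.1.2 uv.2.2}
  have hcover : {ω | (overlapPairs (C ω) n k α y₁ y₂ δ).Nonempty} ⊆ ⋃ uv ∈ S, E uv := by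
    rintro ω ⟨⟨⟨I₁, J₁⟩, ⟨I₂, J₂⟩⟩, hq⟩
    simp only [overlapPairs, mem_filter, mem_product] at hq
    obtain ⟨⟨⟨hI₁, hJ₁⟩, hI₂, hJ₂⟩, ⟨hA₁, -⟩, ⟨hA₂, -⟩, ⟨hlo₁, hup₁⟩, ⟨hlo₂, hup₂⟩⟩ := hq
    refine Set.mem_biUnion (x := ((I₁, I₂), (J₁, J₂))) ?_ ⟨hA₁, hA₂⟩
    simp only [S, largeOverlapPairs, mem_coe, mem_filter, mem_product]
    exact ⟨⟨⟨⟨hI₁, hI₂⟩, hlo₁⟩, ⟨hJ₁, hJ₂⟩, hlo₂⟩, hup₁, hup₂⟩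
  have hterm : ∀ uv ∈ S, μ.real (E uv) ≤ bound := by
    rintro ⟨⟨I₁, I₂⟩, ⟨J₁, J₂⟩⟩ huv
    simp only [S, largeOverlapPairs, mem_filter, mem_product, mem_powersetCard] at huv
    obtain ⟨⟨⟨⟨⟨-, hI₁⟩, -, hI₂⟩, -⟩, ⟨⟨-, hJ₁⟩, -, hJ₂⟩, -⟩, hup₁, hup₂⟩ := huv
    rw [div_lt_iff₀ (by exact_mod_cast hk)] at hup₁ hup₂
    refine measureReal_subAve_ge_and_subAve_ge_le_rpow C hCmeas hCindep hCgauss hn hk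
      hI₁ hJ₁ hI₂ hJ₂ (sub_nonneg.2 hδα) ?_
    calc (#(I₁ ∩ I₂) : ℝ) * #(J₁ ∩ J₂) ≤ ((y₁ + δ) * k) * ((y₂ + δ) * k) :=
          mul_le_mul hup₁.le hup₂.le (by positivity) ((Nat.cast_nonneg _).trans hup₁.le)
      _ = R * k ^ 2 := by ring
  calc μ.real {ω | (overlapPairs (C ω) n k α y₁ y₂ δ).Nonempty}
      ≤ ∑ uv ∈ S, μ.real (E uv) :=
        (measureReal_mono hcover (measure_ne_top _ _)).trans (measureReal_biUnion_finset_le _ _)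
    _ ≤ #S * bound := by simpa using sum_le_sum hterm
    _ ≤ #(largeOverlapPairs n k (y₁ - δ)) * #(largeOverlapPairs n k (y₂ - δ)) * bound := by
        gcongr
        exact_mod_cast (card_filter_le _ _).trans (card_product _ _).le

lemma exists_window_exponent_neg {α y₁ y₂ : ℝ} (hy₁ : 0 ≤ y₁) (hy₂ : 0 ≤ y₂)
    (hneg : fOGP α y₁ y₂ < 0) :
    ∃ δ : ℝ, 0 < δ ∧ δ < 1 ∧
      4 - (y₁ - δ) - (y₂ - δ) - 2 * (α - δ) ^ 2 / (1 + (y₁ + δ) * (y₂ + δ)) < 0 := by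
  set g : ℝ → ℝ := fun δ => 4 - (y₁ - δ) - (y₂ - δ) - 2 * (α - δ) ^ 2 / (1 + (y₁ + δ) * (y₂ + δ))
  have hcont : ContinuousAt g 0 := by fun_prop (disch := simp only [add_zero]; positivity)
  have hev : ∀ᶠ δ in 𝓝 0, g δ < 0 :=
    hcont.eventually (gt_mem_nhds (by simpa [g, fOGP] using hneg))
  obtain ⟨δ, hgδ, hδ⟩ :=
    ((hev.filter_mono nhdsWithin_le_nhds).and (Ioo_mem_nhdsGT zero_lt_one)).exists
  exact ⟨δ, hδ.1, hδ.2, hgδ⟩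

theorem overlap_empty_whp_general
    {Ω : Type} [MeasurableSpace Ω] (μ : Measure Ω) [IsProbabilityMeasure μ]
    (C : Ω → ℕ → ℕ → ℝ)
    (hCmeas : ∀ i j, Measurable fun ω => C ω i j)
    (hCindep : iIndepFun
      (fun p : ℕ × ℕ => fun ω => C ω p.1 p.2) μ)
    (hCgauss : ∀ i j, Measure.map (fun ω => C ω i j) μ = gaussianReal 0 1)
    (α y₁ y₂ : ℝ) (hα₁ : 1 < α)
    (hy₁ : y₁ ∈ Set.Icc (0 : ℝ) 1) (hy₂ : y₂ ∈ Set.Icc (0 : ℝ) 1)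
    (hneg : fOGP α y₁ y₂ < 0) :
    ∀ ε : ℝ, 0 < ε → ∀ c : ℝ, 0 < c → ∃ δ : ℝ, 0 < δ ∧ ∃ n₀ : ℕ, 0 < n₀ ∧
      ∀ n, n₀ ≤ n → ∀ k : ℕ, 1 ≤ k → (k : ℝ) ≤ c * Real.log n →
        μ {ω | (overlapPairs (C ω) n k α y₁ y₂ δ).Nonempty} < ENNReal.ofReal ε := by
  intro ε hε _ _
  obtain ⟨δ, hδ, hδ1, he⟩ := exists_window_exponent_neg hy₁.1 hy₂.1 hneg
  set e := 4 - (y₁ - δ) - (y₂ - δ) - 2 * (α - δ) ^ 2 / (1 + (y₁ + δ) * (y₂ + δ))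
  have hlim : Tendsto (fun n : ℕ => 16 * (n : ℝ) ^ e) atTop (𝓝 0) := by
    simpa using ((tendsto_rpow_neg_atTop (neg_pos.2 he)).comp
      tendsto_natCast_atTop_atTop).const_mul 16
  obtain ⟨n₀, hn₀⟩ := eventually_atTop.1 (hlim.eventually (gt_mem_nhds (lt_min hε one_pos)))
  refine ⟨δ, hδ, n₀ + 1, n₀.succ_pos, fun n hn k hk _ => ?_⟩
  have hn1 : 1 ≤ n := by omega
  have hn0 : (0 : ℝ) < n := by exact_mod_cast hn1
  have hsmall := lt_min_iff.1 (hn₀ n (by omega))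
  rw [← ofReal_measureReal, ENNReal.ofReal_lt_ofReal_iff hε]
  calc μ.real {ω | (overlapPairs (C ω) n k α y₁ y₂ δ).Nonempty}
      ≤ #(largeOverlapPairs n k (y₁ - δ)) * #(largeOverlapPairs n k (y₂ - δ))
        * ((n : ℝ) ^ (-(2 * (α - δ) ^ 2 / (1 + (y₁ + δ) * (y₂ + δ))))) ^ k :=
        measureReal_overlapPairs_nonempty_le C hCmeas hCindep hCgauss hn1 hk (by linarith)
    _ ≤ (4 * (n : ℝ) ^ (2 - (y₁ - δ))) ^ k * (4 * (n : ℝ) ^ (2 - (y₂ - δ))) ^ k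
        * ((n : ℝ) ^ (-(2 * (α - δ) ^ 2 / (1 + (y₁ + δ) * (y₂ + δ))))) ^ k := by
        gcongr <;> exact card_largeOverlapPairs_le hn1 hk _
    _ = (16 * (n : ℝ) ^ e) ^ k := by
        rw [← mul_pow, ← mul_pow, show e = (2 - (y₁ - δ)) + (2 - (y₂ - δ))
          + -(2 * (α - δ) ^ 2 / (1 + (y₁ + δ) * (y₂ + δ))) by ring,
          Real.rpow_add hn0, Real.rpow_add hn0]
        ring
    _ ≤ 16 * (n : ℝ) ^ e := pow_le_of_le_one (by positivity) hsmall.2.le (by omega)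
    _ < ε := hsmall.1

/-- **Theorem 4, second part (non-achievable overlaps).** Fix `α ∈ (1,√2)` and
`y₁, y₂ ∈ [0,1]` with `f(α,y₁,y₂) < 0`. For every `ε > 0` and `c > 0` there exist `δ > 0`
and `n₀` such that for all `n ≥ n₀` and all positive integers `k ≤ c log n`,
`P(𝒪(α,y₁,y₂,δ) ≠ ∅) < ε`. -/
theorem overlap_empty_whp
    {Ω : Type} [MeasurableSpace Ω] (μ : Measure Ω) [IsProbabilityMeasure μ]
    (C : Ω → ℕ → ℕ → ℝ)
    (hCmeas : ∀ i j, Measurable fun ω => C ω i j)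
    (hCindep : iIndepFun
      (fun p : ℕ × ℕ => fun ω => C ω p.1 p.2) μ)
    (hCgauss : ∀ i j, Measure.map (fun ω => C ω i j) μ = gaussianReal 0 1)
    (α y₁ y₂ : ℝ) (hα₁ : 1 < α) (hα₂ : α < Real.sqrt 2)
    (hy₁ : y₁ ∈ Set.Icc (0 : ℝ) 1) (hy₂ : y₂ ∈ Set.Icc (0 : ℝ) 1)
    (hneg : fOGP α y₁ y₂ < 0) :
    ∀ ε : ℝ, 0 < ε → ∀ c : ℝ, 0 < c → ∃ δ : ℝ, 0 < δ ∧ ∃ n₀ : ℕ, 0 < n₀ ∧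
      ∀ n, n₀ ≤ n → ∀ k : ℕ, 1 ≤ k → (k : ℝ) ≤ c * Real.log n →
        μ {ω | (overlapPairs (C ω) n k α y₁ y₂ δ).Nonempty} < ENNReal.ofReal ε :=
  overlap_empty_whp_general μ C hCmeas hCindep hCgauss α y₁ y₂ hα₁ hy₁ hy₂ hneg
end
end

section
/- For every α with 0 < α < √(3/2) and every (y₁, y₂) ∈ [0,1]², one has f(α, y₁, y₂) > 0, where f(α,y₁,y₂) = 4 − y₁ − y₂ − 2α²/(1 + y₁y₂). Moreover, for every α with √(3/2) < α < √2 one has f(α, 1, 0) = 3 − 2α² < 0; consequently, for α ∈ (0, √2), min_{(y₁,y₂) ∈ [0,1]²} f(α, y₁, y₂) ≥ 0 if and only if α ≤ √(3/2). -/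
noncomputable section

lemma fOGP_key (y₁ y₂ : ℝ) (h1 : y₁ ∈ Set.Icc (0:ℝ) 1) (h2 : y₂ ∈ Set.Icc (0:ℝ) 1) :
    3 ≤ (4 - y₁ - y₂) * (1 + y₁ * y₂) := by
  obtain ⟨a, b⟩ := h1; obtain ⟨c, d⟩ := h2
  nlinarith [mul_nonneg (sub_nonneg.2 b) (sub_nonneg.2 d), mul_nonneg a c,
    mul_nonneg (mul_nonneg a c) (by linarith : (0:ℝ) ≤ 3 - y₁ - y₂)]

lemma denom_pos (y₁ y₂ : ℝ) (h1 : y₁ ∈ Set.Icc (0:ℝ) 1) (h2 : y₂ ∈ Set.Icc (0:ℝ) 1) :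
    0 < 1 + y₁ * y₂ := by nlinarith [mul_nonneg h1.1 h2.1]

lemma fOGP_nonneg_of_sq (α y₁ y₂ : ℝ) (hα : α ^ 2 ≤ 3 / 2)
    (h1 : y₁ ∈ Set.Icc (0:ℝ) 1) (h2 : y₂ ∈ Set.Icc (0:ℝ) 1) : 0 ≤ fOGP α y₁ y₂ := by
  have hd := denom_pos y₁ y₂ h1 h2
  have hk := fOGP_key y₁ y₂ h1 h2
  rw [fOGP, sub_nonneg, div_le_iff₀ hd]
  nlinarith

/-- **First phase transition at `α₁* = √(3/2)`.** For `0 < α < √(3/2)` the exponent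
`f(α, y₁, y₂)` is positive on all of `[0,1]²`; for `√(3/2) < α < √2` one has
`f(α,1,0) = 3 − 2α² < 0`; consequently for `α ∈ (0,√2)`, `f(α,·,·) ≥ 0` on `[0,1]²`
if and only if `α ≤ √(3/2)`. -/
theorem ogp_first_phase_transition :
    (∀ α : ℝ, 0 < α → α < Real.sqrt (3 / 2) →
      ∀ y₁ ∈ Set.Icc (0 : ℝ) 1, ∀ y₂ ∈ Set.Icc (0 : ℝ) 1, 0 < fOGP α y₁ y₂) ∧
    (∀ α : ℝ, Real.sqrt (3 / 2) < α → α < Real.sqrt 2 →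
      fOGP α 1 0 = 3 - 2 * α ^ 2 ∧ 3 - 2 * α ^ 2 < 0) ∧
    (∀ α : ℝ, 0 < α → α < Real.sqrt 2 →
      ((∀ y₁ ∈ Set.Icc (0 : ℝ) 1, ∀ y₂ ∈ Set.Icc (0 : ℝ) 1, 0 ≤ fOGP α y₁ y₂) ↔
        α ≤ Real.sqrt (3 / 2))) := by
  refine ⟨?_, ?_, ?_⟩
  · intro α hα hlt y₁ h1 y₂ h2
    have hsq : α ^ 2 < 3 / 2 := by
      have := Real.sq_sqrt (by norm_num : (3:ℝ)/2 ≥ 0)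
      nlinarith [Real.sqrt_nonneg ((3:ℝ)/2)]
    have hd := denom_pos y₁ y₂ h1 h2
    have hk := fOGP_key y₁ y₂ h1 h2
    rw [fOGP, sub_pos, div_lt_iff₀ hd]
    nlinarith
  · intro α hgt _
    have h32 : Real.sqrt (3/2) ^ 2 = 3/2 := Real.sq_sqrt (by norm_num)
    have hs : (0:ℝ) ≤ Real.sqrt (3/2) := Real.sqrt_nonneg _
    constructor
    · simp [fOGP]; ring
    · nlinarith
  · intro α hα _
    constructor
    · intro h
      have := h 1 (by norm_num) 0 (by norm_num)
      have h0 : fOGP α 1 0 = 3 - 2 * α ^ 2 := by simp [fOGP]; ring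
      have hsq : α ^ 2 ≤ 3 / 2 := by rw [h0] at this; linarith
      calc α = Real.sqrt (α ^ 2) := by rw [Real.sqrt_sq hα.le]
        _ ≤ Real.sqrt (3/2) := Real.sqrt_le_sqrt hsq
    · intro hle y₁ h1 y₂ h2
      have hsq : α ^ 2 ≤ 3 / 2 := by
        have := Real.sq_sqrt (by norm_num : (0:ℝ) ≤ 3/2)
        nlinarith [Real.sqrt_nonneg ((3:ℝ)/2)]
      exact fOGP_nonneg_of_sq α y₁ y₂ hsq h1 h2
end
end

section
/- Let α* = 5√2/(3√3). Then: (i) f(α*, 1/3, 1/3) = 0; (ii) y = 1/3 satisfies the stationary-point equation y⁴ + 2y² − 2(α*)²y + 1 = 0; and (iii) for every y₂ ∈ [0,1] with y₂ ≠ 1/3, f(α*, 1/3, y₂) < 0 (and by symmetry f(α*, y₁, 1/3) < 0 for every y₁ ∈ [0,1] with y₁ ≠ 1/3). -/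
noncomputable section

/-- **The critical value `α* = 5√2/(3√3)`.** (i) `f(α*, 1/3, 1/3) = 0`;
(ii) `y = 1/3` satisfies the stationary-point equation `y⁴ + 2y² − 2(α*)²y + 1 = 0`;
(iii) `f(α*, 1/3, y₂) < 0` for every `y₂ ∈ [0,1]` with `y₂ ≠ 1/3`, and symmetrically
`f(α*, y₁, 1/3) < 0` for every `y₁ ∈ [0,1]` with `y₁ ≠ 1/3`. -/
theorem alpha_star_critical_point :
    fOGP (5 * Real.sqrt 2 / (3 * Real.sqrt 3)) (1 / 3) (1 / 3) = 0 ∧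
    (1 / 3 : ℝ) ^ 4 + 2 * (1 / 3 : ℝ) ^ 2
        - 2 * (5 * Real.sqrt 2 / (3 * Real.sqrt 3)) ^ 2 * (1 / 3 : ℝ) + 1 = 0 ∧
    (∀ y₂ ∈ Set.Icc (0 : ℝ) 1, y₂ ≠ 1 / 3 →
      fOGP (5 * Real.sqrt 2 / (3 * Real.sqrt 3)) (1 / 3) y₂ < 0) ∧
    (∀ y₁ ∈ Set.Icc (0 : ℝ) 1, y₁ ≠ 1 / 3 →
      fOGP (5 * Real.sqrt 2 / (3 * Real.sqrt 3)) y₁ (1 / 3) < 0) := by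
  have hα2 : (5 * Real.sqrt 2 / (3 * Real.sqrt 3)) ^ 2 = 50 / 27 := by
    have h2 : Real.sqrt 2 ^ 2 = 2 := Real.sq_sqrt (by norm_num)
    have h3 : Real.sqrt 3 ^ 2 = 3 := Real.sq_sqrt (by norm_num)
    have h3ne : Real.sqrt 3 ≠ 0 := by positivity
    field_simp [div_pow]
    nlinarith [h2, h3]
  have key : ∀ y ∈ Set.Icc (0 : ℝ) 1, y ≠ 1 / 3 →
      fOGP (5 * Real.sqrt 2 / (3 * Real.sqrt 3)) (1 / 3) y < 0 := by
    intro y hy hne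
    obtain ⟨hy0, hy1⟩ := hy
    have hpos : (0 : ℝ) < 1 + 1 / 3 * y := by linarith
    have hsq : (3 * y - 1) ^ 2 > 0 := by
      have : 3 * y - 1 ≠ 0 := fun h => hne (by linarith)
      positivity
    unfold fOGP
    rw [hα2, sub_neg, lt_div_iff₀ hpos]
    nlinarith [hsq]
  refine ⟨?_, ?_, key, ?_⟩
  · unfold fOGP; rw [hα2]; norm_num
  · rw [hα2]; norm_num
  · intro y hy hne
    have := key y hy hne
    unfold fOGP at *
    rw [show y * (1/3 : ℝ) = 1/3 * y from mul_comm _ _]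
    linarith
end
end

section
/- Fix positive integers k₁, k₂, k, n with k₁ ≤ k ≤ n and k₂ ≤ k ≤ n, and subsets I₁, I₂, J₁, J₂ ⊆ [n] with |I₁| = |I₂| = |J₁| = |J₂| = k, |I₁ ∩ I₂| = k₁ and |J₁ ∩ J₂| = k₂. Let X, Y₁, Y₂ be mutually independent centered Gaussian random variables with Var(X) = k₁k₂ and Var(Y₁) = Var(Y₂) = k² − k₁k₂. Then the pair of entry sums (Sum(C^n_{I₁,J₁}), Sum(C^n_{I₂,J₂})) equals in distribution (X + Y₁, X + Y₂). -/
/-!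
Write both entry sums as sums of the independent standard Gaussians `C i j` over
`P = I₁ × J₁` and `R = I₂ × J₂`. Both contain the sum over `P ∩ R = (I₁ ∩ I₂) × (J₁ ∩ J₂)`,
with `k₁k₂` terms, and the rest are sums over `P \ R` and `R \ P`, with `k² − k₁k₂` terms each.
The three index blocks are disjoint, so the three block sums are independent, and each is a
centred Gaussian whose variance is the size of its block.
-/

open MeasureTheory ProbabilityTheory Filter
open scoped ENNReal NNReal

noncomputable section

namespace ProbabilityTheory

variable {Ω ι : Type*} {f : ι → Ω → ℝ}

lemma measurable_finsetSum_iSup_comap {S : Finset ι} {U : Set ι} (hSU : ↑S ⊆ U) :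
    Measurable[⨆ i ∈ U, MeasurableSpace.comap (f i) inferInstance]
      (fun ω => ∑ i ∈ S, f i ω) :=
  Finset.measurable_sum S fun i hi => (comap_measurable (f i)).mono
    (le_iSup₂ (f := fun i _ => MeasurableSpace.comap (f i) inferInstance) i (hSU hi)) le_rfl

variable [MeasurableSpace Ω] {μ : Measure Ω}

lemma iIndepFun.indepFun_of_measurable_iSup {β γ : Type*} [MeasurableSpace β]
    [MeasurableSpace γ] (hf : iIndepFun f μ) (hf_meas : ∀ i, Measurable (f i))
    {S T : Set ι} (hST : Disjoint S T) {X : Ω → β} {Y : Ω → γ}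
    (hX : Measurable[⨆ i ∈ S, MeasurableSpace.comap (f i) inferInstance] X)
    (hY : Measurable[⨆ i ∈ T, MeasurableSpace.comap (f i) inferInstance] Y) :
    IndepFun X Y μ := by
  rw [IndepFun_iff_Indep]
  have h := indep_iSup_of_disjoint (fun i => (hf_meas i).comap_le)
    ((iIndepFun_iff_iIndep _ f μ).mp hf) hST
  exact indep_of_indep_of_le_right (indep_of_indep_of_le_left h hX.comap_le) hY.comap_le

lemma iIndepFun.map_finsetSum_eq_gaussianReal (hf : iIndepFun f μ)
    (hf_meas : ∀ i, Measurable (f i)) {m : ι → ℝ} {v : ι → ℝ≥0}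
    (hf_law : ∀ i, μ.map (f i) = gaussianReal (m i) (v i)) (S : Finset ι) :
    μ.map (fun ω => ∑ i ∈ S, f i ω) = gaussianReal (∑ i ∈ S, m i) (∑ i ∈ S, v i) := by
  classical
  have := hf.isProbabilityMeasure
  induction S using Finset.induction_on with
  | empty =>
    simp only [Finset.sum_empty, gaussianReal_zero_var]
    rw [Measure.map_const, measure_univ, one_smul]
  | insert a S ha ih =>
    have h_indep : IndepFun (f a) (fun ω => ∑ i ∈ S, f i ω) μ := by
      simpa only [← Finset.sum_apply] using (hf.indepFun_finsetSum_of_notMem hf_meas ha).symm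
    simp only [Finset.sum_insert ha]
    exact gaussianReal_add_gaussianReal_of_indepFun h_indep (hf_law a) ih

lemma iIndepFun.map_finsetSum_prod_eq_gaussianReal_prod (hf : iIndepFun f μ)
    (hf_meas : ∀ i, Measurable (f i)) {m : ι → ℝ} {v : ι → ℝ≥0}
    (hf_law : ∀ i, μ.map (f i) = gaussianReal (m i) (v i)) {A B D : Finset ι}
    (hAB : Disjoint A B) (hAD : Disjoint A D) (hBD : Disjoint B D) :
    μ.map (fun ω => (∑ i ∈ A, f i ω, (∑ i ∈ B, f i ω, ∑ i ∈ D, f i ω)))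
      = (gaussianReal (∑ i ∈ A, m i) (∑ i ∈ A, v i)).prod
          ((gaussianReal (∑ i ∈ B, m i) (∑ i ∈ B, v i)).prod
            (gaussianReal (∑ i ∈ D, m i) (∑ i ∈ D, v i))) := by
  have := hf.isProbabilityMeasure
  have h_meas (S : Finset ι) : Measurable fun ω => ∑ i ∈ S, f i ω :=
    Finset.measurable_sum S fun i _ => hf_meas i
  have h_indep_BD : IndepFun (fun ω => ∑ i ∈ B, f i ω) (fun ω => ∑ i ∈ D, f i ω) μ :=
    hf.indepFun_of_measurable_iSup hf_meas (Finset.disjoint_coe.mpr hBD)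
      (measurable_finsetSum_iSup_comap subset_rfl) (measurable_finsetSum_iSup_comap subset_rfl)
  have h_indep_A : IndepFun (fun ω => ∑ i ∈ A, f i ω)
      (fun ω => (∑ i ∈ B, f i ω, ∑ i ∈ D, f i ω)) μ :=
    hf.indepFun_of_measurable_iSup hf_meas (T := ↑B ∪ ↑D)
      (Set.disjoint_union_right.mpr ⟨Finset.disjoint_coe.mpr hAB, Finset.disjoint_coe.mpr hAD⟩)
      (measurable_finsetSum_iSup_comap subset_rfl)
      ((measurable_finsetSum_iSup_comap Set.subset_union_left).prodMk
        (measurable_finsetSum_iSup_comap Set.subset_union_right))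
  rw [h_indep_A.map_prod_eq_prod_map_map (h_meas A).aemeasurable
      ((h_meas B).prodMk (h_meas D)).aemeasurable,
    h_indep_BD.map_prod_eq_prod_map_map (h_meas B).aemeasurable (h_meas D).aemeasurable,
    hf.map_finsetSum_eq_gaussianReal hf_meas hf_law,
    hf.map_finsetSum_eq_gaussianReal hf_meas hf_law,
    hf.map_finsetSum_eq_gaussianReal hf_meas hf_law]

lemma iIndepFun.map_finsetSum_finsetSum_eq_map_gaussianReal_prod [DecidableEq ι]
    (hf : iIndepFun f μ) (hf_meas : ∀ i, Measurable (f i)) {m : ι → ℝ} {v : ι → ℝ≥0}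
    (hf_law : ∀ i, μ.map (f i) = gaussianReal (m i) (v i)) (P R : Finset ι) :
    μ.map (fun ω => (∑ i ∈ P, f i ω, ∑ i ∈ R, f i ω))
      = ((gaussianReal (∑ i ∈ P ∩ R, m i) (∑ i ∈ P ∩ R, v i)).prod
          ((gaussianReal (∑ i ∈ P \ R, m i) (∑ i ∈ P \ R, v i)).prod
            (gaussianReal (∑ i ∈ R \ P, m i) (∑ i ∈ R \ P, v i)))).map
          fun x => (x.1 + x.2.1, x.1 + x.2.2) := by
  have h_split : (fun ω => (∑ i ∈ P, f i ω, ∑ i ∈ R, f i ω))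
      = (fun x : ℝ × ℝ × ℝ => (x.1 + x.2.1, x.1 + x.2.2)) ∘
          fun ω => (∑ i ∈ P ∩ R, f i ω, (∑ i ∈ P \ R, f i ω, ∑ i ∈ R \ P, f i ω)) := by
    ext ω
    · exact (Finset.sum_inter_add_sum_sdiff P R _).symm
    · simp only [Function.comp_apply, Finset.inter_comm P R]
      exact (Finset.sum_inter_add_sum_sdiff R P _).symm
  have h_meas (S : Finset ι) : Measurable fun ω => ∑ i ∈ S, f i ω :=
    Finset.measurable_sum S fun i _ => hf_meas i
  rw [h_split, ← Measure.map_map (by fun_prop) ((h_meas _).prodMk ((h_meas _).prodMk (h_meas _))),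
    hf.map_finsetSum_prod_eq_gaussianReal_prod hf_meas hf_law
      (disjoint_sdiff_self_right.mono_left Finset.inter_subset_right)
      (disjoint_sdiff_self_right.mono_left Finset.inter_subset_left) disjoint_sdiff_sdiff]

end ProbabilityTheory

theorem pair_of_submatrix_sums_distribution_general
    {Ω : Type} [MeasurableSpace Ω] (μ : Measure Ω)
    (C : Ω → ℕ → ℕ → ℝ)
    (hCmeas : ∀ i j, Measurable fun ω => C ω i j)
    (hCindep : iIndepFun
      (fun p : ℕ × ℕ => fun ω => C ω p.1 p.2) μ)
    (hCgauss : ∀ i j, Measure.map (fun ω => C ω i j) μ = gaussianReal 0 1)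
    (k k₁ k₂ : ℕ)
    (I₁ I₂ J₁ J₂ : Finset ℕ)
    (hI₁c : I₁.card = k) (hI₂c : I₂.card = k) (hJ₁c : J₁.card = k) (hJ₂c : J₂.card = k)
    (hII : (I₁ ∩ I₂).card = k₁) (hJJ : (J₁ ∩ J₂).card = k₂) :
    Measure.map (fun ω => (subSum (C ω) I₁ J₁, subSum (C ω) I₂ J₂)) μ
      = Measure.map (fun v : ℝ × ℝ × ℝ => (v.1 + v.2.1, v.1 + v.2.2))
          ((gaussianReal 0 ((k₁ * k₂ : ℕ) : ℝ≥0)).prod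
            ((gaussianReal 0 ((k * k - k₁ * k₂ : ℕ) : ℝ≥0)).prod
              (gaussianReal 0 ((k * k - k₁ * k₂ : ℕ) : ℝ≥0)))) := by
  classical
  have h_subSum (I J : Finset ℕ) (ω : Ω) : subSum (C ω) I J = ∑ p ∈ I ×ˢ J, C ω p.1 p.2 :=
    (Finset.sum_product I J fun p => C ω p.1 p.2).symm
  have h_card_inter : (I₁ ×ˢ J₁ ∩ I₂ ×ˢ J₂).card = k₁ * k₂ := by
    rw [Finset.product_inter_product, Finset.card_product, hII, hJJ]
  have h_card_sdiff₁ : (I₁ ×ˢ J₁ \ I₂ ×ˢ J₂).card = k * k - k₁ * k₂ := by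
    rw [Finset.card_sdiff, Finset.inter_comm, h_card_inter, Finset.card_product, hI₁c, hJ₁c]
  have h_card_sdiff₂ : (I₂ ×ˢ J₂ \ I₁ ×ˢ J₁).card = k * k - k₁ * k₂ := by
    rw [Finset.card_sdiff, h_card_inter, Finset.card_product, hI₂c, hJ₂c]
  simp_rw [h_subSum]
  rw [hCindep.map_finsetSum_finsetSum_eq_map_gaussianReal_prod (fun p => hCmeas p.1 p.2)
    (fun p => hCgauss p.1 p.2)]
  simp only [Finset.sum_const_zero, Finset.sum_const, nsmul_one, h_card_inter, h_card_sdiff₁,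
    h_card_sdiff₂]

/-- **Joint law of the entry sums of two overlapping submatrices.** Let `C` be an
infinite array of i.i.d. standard Gaussians, and let `I₁, I₂, J₁, J₂ ⊆ [n]` have
cardinality `k` with `|I₁ ∩ I₂| = k₁`, `|J₁ ∩ J₂| = k₂` (`k₁, k₂` positive, `≤ k ≤ n`).
Let `X, Y₁, Y₂` be independent centered Gaussians with variances `k₁k₂`, `k² − k₁k₂`,
`k² − k₁k₂`. Then `(Sum C_{I₁,J₁}, Sum C_{I₂,J₂})` equals `(X + Y₁, X + Y₂)` in
distribution. -/
theorem pair_of_submatrix_sums_distribution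
    {Ω : Type} [MeasurableSpace Ω] (μ : Measure Ω) [IsProbabilityMeasure μ]
    (C : Ω → ℕ → ℕ → ℝ)
    (hCmeas : ∀ i j, Measurable fun ω => C ω i j)
    (hCindep : iIndepFun
      (fun p : ℕ × ℕ => fun ω => C ω p.1 p.2) μ)
    (hCgauss : ∀ i j, Measure.map (fun ω => C ω i j) μ = gaussianReal 0 1)
    (n k k₁ k₂ : ℕ) (hk₁pos : 0 < k₁) (hk₂pos : 0 < k₂)
    (hk₁ : k₁ ≤ k) (hk₂ : k₂ ≤ k) (hkn : k ≤ n)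
    (I₁ I₂ J₁ J₂ : Finset ℕ)
    (hI₁ : I₁ ⊆ Finset.range n) (hI₂ : I₂ ⊆ Finset.range n)
    (hJ₁ : J₁ ⊆ Finset.range n) (hJ₂ : J₂ ⊆ Finset.range n)
    (hI₁c : I₁.card = k) (hI₂c : I₂.card = k) (hJ₁c : J₁.card = k) (hJ₂c : J₂.card = k)
    (hII : (I₁ ∩ I₂).card = k₁) (hJJ : (J₁ ∩ J₂).card = k₂) :
    Measure.map (fun ω => (subSum (C ω) I₁ J₁, subSum (C ω) I₂ J₂)) μ
      = Measure.map (fun v : ℝ × ℝ × ℝ => (v.1 + v.2.1, v.1 + v.2.2))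
          ((gaussianReal 0 ((k₁ * k₂ : ℕ) : ℝ≥0)).prod
            ((gaussianReal 0 ((k * k - k₁ * k₂ : ℕ) : ℝ≥0)).prod
              (gaussianReal 0 ((k * k - k₁ * k₂ : ℕ) : ℝ≥0)))) :=
  pair_of_submatrix_sums_distribution_general μ C hCmeas hCindep hCgauss k k₁ k₂ I₁ I₂ J₁ J₂ hI₁c
    hI₂c hJ₁c hJ₂c hII hJJ
end
end

section
/- Fix c > 0. For every ε > 0 there exists n₀ such that for all n ≥ n₀, all integers k with 1 ≤ k ≤ c log n, and all integers k₁, k₂ with 0 ≤ k₁ ≤ k and 0 ≤ k₂ ≤ k, one has | (1/(k log n)) · log( [n!/((k−k₁)!·k₁!·(k−k₁)!·(n−2k+k₁)!)] · [n!/((k−k₂)!·k₂!·(k−k₂)!·(n−2k+k₂)!)] ) − (4 − k₁/k − k₂/k) | ≤ ε. -/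
open Filter

noncomputable section

/-! Writing `m = 2k - j`, the count `n! / ((k-j)!² j! (n-m)!)` is the falling factorial
`n (n-1) ⋯ (n-m+1)` divided by `(k-j)!² j! ≤ k^{2k}`. When `2m ≤ n` every factor of the falling
factorial lies in `[n/2, n]`, so its logarithm is `m log n` up to `m log 2`. Hence each of the two
counts has logarithm `(2k - j) log n + O(k log k)`, and `log k = O(log log n)` is negligible
against `log n` once `k ≤ c log n`; the hypothesis `k ≤ c log n` also makes `4k ≤ n` eventually. -/

/-- The number of ordered pairs of `k`-subsets of `{1, …, n}` meeting in exactly `j` elements. -/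
def overlapCount (n k j : ℕ) : ℝ :=
  n.factorial / ((k - j).factorial * j.factorial * (k - j).factorial * (n + j - 2 * k).factorial)

lemma abs_log_descFactorial_sub_le {n m : ℕ} (h : 2 * m ≤ n) :
    |Real.log (n.descFactorial m) - m * Real.log n| ≤ m * Real.log 2 := by
  rcases Nat.eq_zero_or_pos n with rfl | hn
  · obtain rfl : m = 0 := by omega
    simp
  have hdesc : (0 : ℝ) < n.descFactorial m := by exact_mod_cast Nat.descFactorial_pos.mpr (by omega)
  have upper : n.descFactorial m ≤ n ^ m := Nat.descFactorial_le_pow n m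
  have lower : n ^ m ≤ 2 ^ m * n.descFactorial m :=
    calc n ^ m ≤ (2 * (n + 1 - m)) ^ m := Nat.pow_le_pow_left (by omega) m
      _ ≤ 2 ^ m * n.descFactorial m := by
        rw [mul_pow]; exact Nat.mul_le_mul_left _ (Nat.pow_sub_le_descFactorial n m)
  have log_upper : Real.log (n.descFactorial m) ≤ m * Real.log n := by
    rw [← Real.log_pow]
    exact Real.log_le_log hdesc (by exact_mod_cast upper)
  have log_lower : m * Real.log n ≤ m * Real.log 2 + Real.log (n.descFactorial m) := by
    rw [← Real.log_pow, ← Real.log_pow, ← Real.log_mul (by positivity) hdesc.ne']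
    exact Real.log_le_log (by positivity) (by exact_mod_cast lower)
  rw [abs_le]
  constructor <;> nlinarith [Real.log_nonneg (one_le_two : (1 : ℝ) ≤ 2)]

lemma factorial_sub_mul_factorial_mul_factorial_sub_le_pow {k j : ℕ} (hj : j ≤ k) :
    (k - j).factorial * j.factorial * (k - j).factorial ≤ k ^ (2 * k) :=
  calc (k - j).factorial * j.factorial * (k - j).factorial
      = (j.factorial * (k - j).factorial) * (k - j).factorial := by ring
    _ ≤ k.factorial * k.factorial :=
      Nat.mul_le_mul (Nat.le_of_dvd k.factorial_pos (Nat.factorial_mul_factorial_dvd_factorial hj))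
        (Nat.factorial_le (Nat.sub_le k j))
    _ ≤ k ^ k * k ^ k := Nat.mul_le_mul (Nat.factorial_le_pow k) (Nat.factorial_le_pow k)
    _ = k ^ (2 * k) := by rw [← pow_add, two_mul]

lemma overlapCount_eq_descFactorial_div {n k j : ℕ} (hj : j ≤ k) (h : 2 * k - j ≤ n) :
    overlapCount n k j = n.descFactorial (2 * k - j) /
      ((k - j).factorial * j.factorial * (k - j).factorial : ℕ) := by
  have hidx : n + j - 2 * k = n - (2 * k - j) := by omega
  rw [overlapCount, hidx, ← Nat.factorial_mul_descFactorial h]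
  push_cast
  have : ((n - (2 * k - j)).factorial : ℝ) ≠ 0 := by positivity
  field_simp

lemma abs_log_overlapCount_sub_le {n k j : ℕ} (hj : j ≤ k) (hn : 4 * k ≤ n) :
    |Real.log (overlapCount n k j) - (2 * k - j) * Real.log n| ≤
      2 * k * (Real.log 2 + Real.log k) := by
  set D := (k - j).factorial * j.factorial * (k - j).factorial
  have hD : (0 : ℝ) < D := by positivity
  have hdesc : (0 : ℝ) < n.descFactorial (2 * k - j) := by
    exact_mod_cast Nat.descFactorial_pos.mpr (by omega)
  have hm : ((2 * k - j : ℕ) : ℝ) = 2 * k - j := by push_cast [Nat.cast_sub (by omega : j ≤ 2 * k)]; ring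
  have desc_bound := abs_log_descFactorial_sub_le (n := n) (m := 2 * k - j) (by omega)
  rw [hm] at desc_bound
  have log_D_le : Real.log D ≤ 2 * k * Real.log k := by
    calc Real.log D ≤ Real.log ((k : ℝ) ^ (2 * k)) := Real.log_le_log hD
          (by exact_mod_cast factorial_sub_mul_factorial_mul_factorial_sub_le_pow hj)
      _ = 2 * k * Real.log k := by rw [Real.log_pow]; push_cast; ring
  have log_D_nonneg : 0 ≤ Real.log D := Real.log_nonneg (by exact_mod_cast hD)
  have hmk : (2 * k - j : ℝ) * Real.log 2 ≤ 2 * k * Real.log 2 := by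
    gcongr
    simp
  rw [overlapCount_eq_descFactorial_div hj (by omega), Real.log_div hdesc.ne' hD.ne']
  rw [abs_le] at desc_bound ⊢
  constructor <;> linarith [desc_bound.1, desc_bound.2]

lemma abs_log_overlapCount_mul_div_sub_le {n k j₁ j₂ : ℕ} (hk : 0 < k) (hj₁ : j₁ ≤ k)
    (hj₂ : j₂ ≤ k) (hn : 4 * k ≤ n) :
    |Real.log (overlapCount n k j₁ * overlapCount n k j₂) / (k * Real.log n)
        - (4 - (j₁ : ℝ) / k - (j₂ : ℝ) / k)| ≤ 4 * ((Real.log 2 + Real.log k) / Real.log n) := by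
  have hk' : (0 : ℝ) < k := by exact_mod_cast hk
  have hlog : 0 < Real.log n := Real.log_pos (by exact_mod_cast (by omega : 1 < n))
  have hpos : ∀ j, j ≤ k → 0 < overlapCount n k j := fun j hj => by
    rw [overlapCount_eq_descFactorial_div hj (by omega)]
    have : 0 < n.descFactorial (2 * k - j) := Nat.descFactorial_pos.mpr (by omega)
    positivity
  have E₁ := abs_log_overlapCount_sub_le (n := n) hj₁ hn
  have E₂ := abs_log_overlapCount_sub_le (n := n) hj₂ hn
  have key : Real.log (overlapCount n k j₁ * overlapCount n k j₂) / (k * Real.log n)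
      - (4 - (j₁ : ℝ) / k - (j₂ : ℝ) / k) =
      ((Real.log (overlapCount n k j₁) - (2 * k - j₁) * Real.log n) +
        (Real.log (overlapCount n k j₂) - (2 * k - j₂) * Real.log n)) / (k * Real.log n) := by
    rw [Real.log_mul (hpos j₁ hj₁).ne' (hpos j₂ hj₂).ne']
    field_simp
    ring
  have hkl : 0 < (k : ℝ) * Real.log n := mul_pos hk' hlog
  rw [key, abs_div, abs_of_pos hkl, div_le_iff₀ hkl]
  calc _ ≤ _ := abs_add_le _ _
    _ ≤ 2 * k * (Real.log 2 + Real.log k) + 2 * k * (Real.log 2 + Real.log k) := add_le_add E₁ E₂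
    _ = _ := by field_simp; ring

lemma eventually_mul_log_le (c : ℝ) : ∀ᶠ x : ℝ in atTop, c * Real.log x ≤ x := by
  filter_upwards [(Real.isLittleO_log_id_atTop.const_mul_left c).bound one_pos,
    eventually_ge_atTop 0] with x hbound hx
  simp only [id, Real.norm_eq_abs, one_mul, abs_of_nonneg hx] at hbound
  exact (le_abs_self _).trans hbound

lemma tendsto_add_log_mul_div_atTop (a : ℝ) {c : ℝ} (hc : c ≠ 0) :
    Tendsto (fun y => (a + Real.log (c * y)) / y) atTop (nhds 0) := by
  have hlog : Tendsto (fun y => Real.log y / y) atTop (nhds 0) := by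
    simpa using Real.isLittleO_log_id_atTop.tendsto_div_nhds_zero
  have hsum : Tendsto (fun y => (a + Real.log c) / y + Real.log y / y) atTop (nhds 0) := by
    simpa using (tendsto_const_nhds.div_atTop tendsto_id).add hlog
  refine hsum.congr' ?_
  filter_upwards [eventually_gt_atTop 0] with y hy
  rw [Real.log_mul hc hy.ne']
  ring

/-- **Multinomial counting asymptotics.** Fix `c > 0`. For every `ε > 0` there is `n₀`
such that for all `n ≥ n₀`, all `k` with `1 ≤ k ≤ c log n` and all `k₁, k₂ ≤ k`,
`| (1/(k log n)) · log( [n!/((k−k₁)!·k₁!·(k−k₁)!·(n−2k+k₁)!)] ·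
[n!/((k−k₂)!·k₂!·(k−k₂)!·(n−2k+k₂)!)] ) − (4 − k₁/k − k₂/k) | ≤ ε`. -/
theorem multinomial_pair_count_asymptotics (c : ℝ) (hc : 0 < c) :
    ∀ ε : ℝ, 0 < ε → ∃ n₀ : ℕ, ∀ n : ℕ, n₀ ≤ n → ∀ k k₁ k₂ : ℕ,
      1 ≤ k → (k : ℝ) ≤ c * Real.log n → k₁ ≤ k → k₂ ≤ k →
      |Real.log
            (((n.factorial : ℝ) /
                ((k - k₁).factorial * k₁.factorial * (k - k₁).factorial *
                  (n + k₁ - 2 * k).factorial)) *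
              ((n.factorial : ℝ) /
                ((k - k₂).factorial * k₂.factorial * (k - k₂).factorial *
                  (n + k₂ - 2 * k).factorial)))
            / ((k : ℝ) * Real.log n)
          - (4 - (k₁ : ℝ) / k - (k₂ : ℝ) / k)| ≤ ε := by
  intro ε hε
  have log_nat := Real.tendsto_log_atTop.comp tendsto_natCast_atTop_atTop
  have small_k : ∀ᶠ n : ℕ in atTop, 4 * c * Real.log n ≤ n :=
    tendsto_natCast_atTop_atTop.eventually (eventually_mul_log_le (4 * c))
  have small_error : ∀ᶠ n : ℕ in atTop,
      (Real.log 2 + Real.log (c * Real.log n)) / Real.log n ≤ ε / 4 :=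
    ((tendsto_add_log_mul_div_atTop _ hc.ne').comp log_nat).eventually_le_const (by positivity)
  obtain ⟨n₀, hn₀⟩ := eventually_atTop.mp (small_k.and small_error)
  refine ⟨n₀, fun n hn k k₁ k₂ hk hkc hk₁ hk₂ => ?_⟩
  obtain ⟨hkn, herr⟩ := hn₀ n hn
  have h4k : 4 * k ≤ n := by exact_mod_cast (by push_cast; linarith : ((4 * k : ℕ) : ℝ) ≤ n)
  have hlogk : Real.log k ≤ Real.log (c * Real.log n) :=
    Real.log_le_log (by exact_mod_cast hk) hkc
  calc _ ≤ 4 * ((Real.log 2 + Real.log k) / Real.log n) :=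
        abs_log_overlapCount_mul_div_sub_le hk hk₁ hk₂ h4k
    _ ≤ 4 * ((Real.log 2 + Real.log (c * Real.log n)) / Real.log n) := by
        gcongr
    _ ≤ ε := by linarith
end
end
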